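/- The O_{Q(√−2)}-Hermitian lattice of rank 2 with Gram matrix [[1, (1+√−2)/2],[(1−√−2)/2, 1]] has trace form Gram matrix [[2,0,1,2],[0,4,−2,2],[1,−2,2,0],[2,2,0,4]] with respect to a suitable Z-basis, and this quadratic lattice is isometric to D4. -/
import Mathlib


noncomputable section
open Complex Matrix

/-- `√−2` in `ℂ`. -/
def sqm2 : ℂ := Real.sqrt 2 * I

/-- Gram matrix of the Hermitian lattice over `ℤ[√−2]`:
`[[1, (1+√−2)/2],[(1−√−2)/2, 1]]`. -/
def H14 : Matrix (Fin 2) (Fin 2) ℂ := !![1, (1 + sqm2) / 2; (1 - sqm2) / 2, 1]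

/-- The Hermitian form `⟨x,y⟩ = xᵀ H ȳ`. -/
def herm14 (x y : Fin 2 → ℂ) : ℂ := ∑ j, ∑ k, x j * H14 j k * starRingEnd ℂ (y k)

/-- `ℤ`-basis `e₁, √−2·e₁, e₂, √−2·e₂` of the underlying `ℤ`-module of `ℤ[√−2]²`. -/
def bas14 : Fin 4 → Fin 2 → ℂ := ![![1, 0], ![sqm2, 0], ![0, 1], ![0, sqm2]]

/-- Gram matrix of the trace form `(x,y) = Tr_{F/ℚ}⟨x,y⟩`. -/
def T14 : Matrix (Fin 4) (Fin 4) ℂ := fun j k =>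
  herm14 (bas14 j) (bas14 k) + starRingEnd ℂ (herm14 (bas14 j) (bas14 k))

/-- The claimed Gram matrix of the trace form. -/
def B14 : Matrix (Fin 4) (Fin 4) ℤ := !![2,0,1,2; 0,4,-2,2; 1,-2,2,0; 2,2,0,4]

/-- A Gram matrix of the `D₄` root lattice. -/
def D4Mat : Matrix (Fin 4) (Fin 4) ℤ := !![2,-1,0,0; -1,2,-1,-1; 0,-1,2,0; 0,-1,0,2]

lemma conj_sqm2 : starRingEnd ℂ sqm2 = -sqm2 := by
  simp [sqm2, Complex.ext_iff]

lemma sqm2_sq : sqm2 * sqm2 = -2 := by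
  have h : (Real.sqrt 2 : ℂ) * Real.sqrt 2 = 2 := by
    rw [← Complex.ofReal_mul, Real.mul_self_sqrt (by norm_num)]
    norm_num
  calc sqm2 * sqm2 = ((Real.sqrt 2 : ℂ) * Real.sqrt 2) * (I * I) := by
        simp only [sqm2]; ring
    _ = -2 := by rw [h, Complex.I_mul_I]; ring

lemma sqm2_pow : sqm2 ^ 2 = -2 := by rw [sq, sqm2_sq]

/-- The `O_{ℚ(√−2)}`-Hermitian lattice of rank 2 with Gram matrix
`[[1, (1+√−2)/2],[(1−√−2)/2, 1]]` has trace form Gram matrix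
`[[2,0,1,2],[0,4,−2,2],[1,−2,2,0],[2,2,0,4]]` with respect to a suitable `ℤ`-basis,
and this quadratic lattice is isometric to `D₄`. -/
theorem stmt_14 :
    (∃ P : Matrix (Fin 4) (Fin 4) ℤ, IsUnit P.det ∧
      (P.map (Int.cast : ℤ → ℂ))ᵀ * T14 * P.map (Int.cast : ℤ → ℂ) =
        B14.map (Int.cast : ℤ → ℂ)) ∧
    (∃ Q : Matrix (Fin 4) (Fin 4) ℤ, IsUnit Q.det ∧ Qᵀ * B14 * Q = D4Mat) := by
  constructor
  · refine ⟨1, by simp, ?_⟩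
    rw [Matrix.map_one (Int.cast) Int.cast_zero Int.cast_one]
    rw [Matrix.transpose_one, Matrix.one_mul, Matrix.mul_one]
    ext i j
    fin_cases i <;> fin_cases j <;>
      simp [T14, herm14, bas14, H14, B14, Fin.sum_univ_succ, map_ofNat,
        conj_sqm2, map_add, map_sub, map_div₀, _root_.map_one, _root_.map_mul] <;>
      (try ring_nf) <;> simp [sqm2_pow] <;> norm_num
  · refine ⟨!![-2,1,0,0; 0,-1,0,1; 1,-2,1,1; 1,0,0,-1], ?_, ?_⟩
    · have h : (!![-2,1,0,0; 0,-1,0,1; 1,-2,1,1; 1,0,0,-1] : Matrix (Fin 4) (Fin 4) ℤ).det = 1 ∨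
          (!![-2,1,0,0; 0,-1,0,1; 1,-2,1,1; 1,0,0,-1] : Matrix (Fin 4) (Fin 4) ℤ).det = -1 := by
        decide
      rcases h with h | h <;> rw [h] <;> exact Int.isUnit_iff.mpr (by simp)
    · decide
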